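/- arXiv:1008.4028 — 3 statements merged into one kernel-verified Lean document; each statement's English description precedes it below -/
import Mathlib

section
/- Let r > 0 and let v be a Lipschitz continuous real function on B_r ∩ {x ∈ ℝⁿ : x·eₙ ≤ 0} with Lipschitz constant L > 0. Let γ₁, γ₂ ∈ ℝⁿ and ε > 0 satisfy γᵢ·eₙ ≥ 0 for i = 1,2 and |γ₁ − γ₂| ≤ ε/L. Let a ∈ ℝ and assume that min{|q| − L, γ₁·q − a} ≤ 0 for all q ∈ D⁺_{B_r ∩ {x·eₙ ≤ 0}} v(0). If p ∈ D⁺_{B_r ∩ {x·eₙ ≤ 0}} v(0) satisfies γ₁·p ≤ a, then γ₂·p ≤ a + ε. -/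
open Set Metric Filter MeasureTheory
open scoped Topology NNReal InnerProductSpace

noncomputable section

abbrev En (n : ℕ) := EuclideanSpace ℝ (Fin n)

/-- The last coordinate unit vector `eₙ = (0,…,0,1)` in `ℝ^{n+1}`. -/
def eLast (n : ℕ) : En (n + 1) := EuclideanSpace.single (Fin.last n) (1 : ℝ)

variable {n : ℕ}

/-- The superdifferential `D⁺_V φ(x)` of `φ` at `x` relative to the set `V`. -/
def supDiff (V : Set (En n)) (φ : En n → ℝ) (x : En n) : Set (En n) :=
  {p | ∀ ε > 0, ∃ δ > 0, ∀ y ∈ V, ‖y - x‖ < δ →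
      φ y ≤ φ x + ⟪p, y - x⟫_ℝ + ε * ‖y - x‖}

lemma norm_eLast (n : ℕ) : ‖eLast n‖ = 1 := by
  rw [eLast, EuclideanSpace.norm_single]; norm_num

lemma inner_eLast_self (n : ℕ) : ⟪eLast n, eLast n⟫_ℝ = 1 := by
  rw [real_inner_self_eq_norm_sq, norm_eLast]; norm_num

lemma supDiff_isClosed (V : Set (En n)) (φ : En n → ℝ) (x : En n) :
    IsClosed (supDiff V φ x) := by
  apply isClosed_of_closure_subset
  intro p hp ε hε
  obtain ⟨p', hp', hd⟩ := Metric.mem_closure_iff.1 hp (ε/2) (by positivity)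
  obtain ⟨δ, hδ, hb⟩ := hp' (ε/2) (by positivity)
  refine ⟨δ, hδ, fun y hy hyd => ?_⟩
  have h1 := hb y hy hyd
  have h2 : ⟪p', y - x⟫_ℝ ≤ ⟪p, y - x⟫_ℝ + (ε/2) * ‖y - x‖ := by
    have h3 : ⟪p' - p, y - x⟫_ℝ ≤ ‖p' - p‖ * ‖y - x‖ := real_inner_le_norm _ _
    have hn : ‖p' - p‖ ≤ ε/2 := by
      rw [← dist_eq_norm, dist_comm]; exact hd.le
    have h4 : ⟪p' - p, y - x⟫_ℝ = ⟪p', y - x⟫_ℝ - ⟪p, y - x⟫_ℝ := inner_sub_left _ _ _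
    nlinarith [norm_nonneg (y - x)]
  linarith

/-- Directional bound: superdifferential elements of an `L`-Lipschitz function on the half
ball are bounded by `L` in all directions with nonnegative last component. -/
lemma dir_bound {n : ℕ} {r : ℝ} (hr : 0 < r) {v : En (n+1) → ℝ} {L : ℝ≥0}
    (hv : LipschitzOnWith L v (ball 0 r ∩ {x : En (n + 1) | ⟪x, eLast n⟫_ℝ ≤ 0}))
    {p : En (n+1)}
    (hp : p ∈ supDiff (ball 0 r ∩ {x : En (n + 1) | ⟪x, eLast n⟫_ℝ ≤ 0}) v 0)
    (u : En (n+1)) (hu : 0 ≤ ⟪u, eLast n⟫_ℝ) : ⟪p, u⟫_ℝ ≤ L * ‖u‖ := by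
  rcases eq_or_ne u 0 with rfl | hu0
  · simp
  have hun : 0 < ‖u‖ := norm_pos_iff.2 hu0
  have h0V : (0 : En (n+1)) ∈ ball (0 : En (n+1)) r ∩ {x : En (n + 1) | ⟪x, eLast n⟫_ℝ ≤ 0} := by
    refine ⟨by simpa using hr, ?_⟩
    simp [Set.mem_setOf_eq]
  apply le_of_forall_pos_le_add
  intro ε hε
  obtain ⟨δ, hδ, hb⟩ := hp (ε / ‖u‖) (by positivity)
  set c : ℝ := min δ r / (2 * ‖u‖) with hc
  have hmin0 : 0 < min δ r := lt_min hδ hr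
  have hc0 : 0 < c := by positivity
  clear_value c
  set y : En (n+1) := (-c) • u with hy
  clear_value y
  have hyn : ‖y‖ = c * ‖u‖ := by
    rw [hy, norm_smul]; simp [abs_of_pos hc0]
  have hcu : c * ‖u‖ = min δ r / 2 := by
    rw [hc]; field_simp
  have hylt : ‖y‖ < min δ r := by rw [hyn, hcu]; linarith
  have hyV : y ∈ ball (0 : En (n+1)) r ∩ {x : En (n + 1) | ⟪x, eLast n⟫_ℝ ≤ 0} := by
    constructor
    · rw [mem_ball, dist_eq_norm, sub_zero]
      exact lt_of_lt_of_le hylt (min_le_right _ _)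
    · rw [Set.mem_setOf_eq, hy, real_inner_smul_left]
      have : 0 ≤ c * ⟪u, eLast n⟫_ℝ := mul_nonneg hc0.le hu
      linarith
  have h1 : v y ≤ v 0 + ⟪p, y - 0⟫_ℝ + (ε / ‖u‖) * ‖y - 0‖ := by
    apply hb y hyV
    rw [sub_zero]; exact lt_of_lt_of_le hylt (min_le_left _ _)
  have h2 : v 0 - v y ≤ L * ‖y‖ := by
    have h := hv.dist_le_mul 0 h0V y hyV
    rw [dist_zero_left] at h
    calc v 0 - v y ≤ |v 0 - v y| := le_abs_self _
    _ = dist (v 0) (v y) := (Real.dist_eq _ _).symm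
    _ ≤ L * ‖y‖ := h
  rw [sub_zero] at h1
  have h3 : ⟪p, y⟫_ℝ = -c * ⟪p, u⟫_ℝ := by
    rw [hy, real_inner_smul_right]
  rw [h3, hyn] at h1
  have h4 : (ε / ‖u‖) * (c * ‖u‖) = ε * c := by field_simp
  rw [h4] at h1
  rw [hyn] at h2
  have h5 : c * ⟪p, u⟫_ℝ ≤ c * ((L : ℝ) * ‖u‖ + ε) := by nlinarith
  exact le_of_mul_le_mul_left h5 hc0

/-- The step lemma: a superdifferential element with negative last component and norm
at least `L` can be pushed up along `eₙ` by a controlled amount. -/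
lemma step_lemma {n : ℕ} {r : ℝ} (hr : 0 < r) {v : En (n+1) → ℝ} {L : ℝ≥0}
    (hv : LipschitzOnWith L v (ball 0 r ∩ {x : En (n + 1) | ⟪x, eLast n⟫_ℝ ≤ 0}))
    {q : En (n+1)}
    (hq : q ∈ supDiff (ball 0 r ∩ {x : En (n + 1) | ⟪x, eLast n⟫_ℝ ≤ 0}) v 0)
    (hσ : ⟪q, eLast n⟫_ℝ < 0) {τ : ℝ} (hτ0 : 0 ≤ τ)
    (hτ : τ * (-⟪q, eLast n⟫_ℝ) ≤ ‖q‖ * (‖q‖ - L)) :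
    q + τ • eLast n ∈ supDiff (ball 0 r ∩ {x : En (n + 1) | ⟪x, eLast n⟫_ℝ ≤ 0}) v 0 := by
  intro ε hε
  have hσ' : 0 < -⟪q, eLast n⟫_ℝ := by linarith
  have hqn : 0 < ‖q‖ := by
    rcases eq_or_ne q 0 with rfl | h
    · simp at hσ
    · exact norm_pos_iff.2 h
  have hq0 : ‖q‖ ≠ 0 := hqn.ne'
  set σ := ⟪q, eLast n⟫_ℝ with hσdef
  have hσ0 : σ ≠ 0 := hσ.ne
  set C : ℝ := 1 + ‖q‖ / (-σ) with hC
  have hC0 : 0 < C := by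
    have h := div_nonneg (norm_nonneg q) hσ'.le
    rw [hC]; linarith
  clear_value σ C
  obtain ⟨δ₁, hδ₁, hb⟩ := hq (ε / C) (div_pos hε hC0)
  refine ⟨min δ₁ r / C, div_pos (lt_min hδ₁ hr) hC0, fun y hy hyd => ?_⟩
  have hye : ⟪y, eLast n⟫_ℝ ≤ 0 := hy.2
  rw [sub_zero] at hyd ⊢
  set yE := ⟪y, eLast n⟫_ℝ with hyE
  clear_value yE
  have hynn : 0 ≤ -yE := by linarith
  set lam : ℝ := (-yE) * ‖q‖ / (-σ) with hlam
  have hlam0 : 0 ≤ lam := div_nonneg (mul_nonneg hynn (norm_nonneg q)) hσ'.le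
  clear_value lam
  set z : En (n+1) := y - (lam / ‖q‖) • q with hz
  clear_value z
  have hze : ⟪z, eLast n⟫_ℝ = 0 := by
    rw [hz, inner_sub_left, real_inner_smul_left, ← hσdef, ← hyE, hlam]
    field_simp
    ring
  have hyz : ‖y - z‖ = lam := by
    rw [hz]
    simp only [sub_sub_cancel]
    rw [norm_smul, Real.norm_eq_abs, abs_of_nonneg (div_nonneg hlam0 (norm_nonneg q))]
    exact div_mul_cancel₀ lam hq0
  have hyinner : -yE ≤ ‖y‖ := by
    have h := abs_real_inner_le_norm y (eLast n)
    rw [norm_eLast, mul_one, ← hyE] at h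
    calc -yE ≤ |yE| := neg_le_abs _
    _ ≤ ‖y‖ := h
  have hzlam : ‖z‖ ≤ ‖y‖ + lam := by
    rw [hz]
    calc ‖y - (lam / ‖q‖) • q‖ ≤ ‖y‖ + ‖(lam / ‖q‖) • q‖ := norm_sub_le _ _
    _ = ‖y‖ + lam := by
        rw [norm_smul, Real.norm_eq_abs, abs_of_nonneg (div_nonneg hlam0 (norm_nonneg q)),
          div_mul_cancel₀ lam hq0]
  have hlamle : lam ≤ ‖q‖ * ‖y‖ / (-σ) := by
    have h : (-yE) * ‖q‖ ≤ ‖q‖ * ‖y‖ := by nlinarith [hyinner, norm_nonneg q]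
    rw [hlam]
    exact (div_le_div_iff_of_pos_right hσ').2 h
  have hzC : ‖z‖ ≤ C * ‖y‖ := by
    have hCexp : C * ‖y‖ = ‖y‖ + ‖q‖ * ‖y‖ / (-σ) := by rw [hC]; field_simp
    rw [hCexp]
    linarith
  have hzmin : ‖z‖ < min δ₁ r := by
    calc ‖z‖ ≤ C * ‖y‖ := hzC
    _ < C * (min δ₁ r / C) := mul_lt_mul_of_pos_left hyd hC0
    _ = min δ₁ r := by field_simp
  have hzV : z ∈ ball (0 : En (n+1)) r ∩ {x : En (n + 1) | ⟪x, eLast n⟫_ℝ ≤ 0} := by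
    constructor
    · rw [mem_ball, dist_eq_norm, sub_zero]
      exact lt_of_lt_of_le hzmin (min_le_right _ _)
    · rw [Set.mem_setOf_eq, hze]
  have h1 : v z ≤ v 0 + ⟪q, z - 0⟫_ℝ + (ε / C) * ‖z - 0‖ := by
    apply hb z hzV
    rw [sub_zero]; exact lt_of_lt_of_le hzmin (min_le_left _ _)
  have h2 : v y - v z ≤ L * lam := by
    have h := hv.dist_le_mul y hy z hzV
    rw [dist_eq_norm y z, hyz] at h
    calc v y - v z ≤ |v y - v z| := le_abs_self _
    _ = dist (v y) (v z) := (Real.dist_eq _ _).symm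
    _ ≤ L * lam := h
  rw [sub_zero] at h1
  have hqz : ⟪q, z⟫_ℝ = ⟪q, y⟫_ℝ - lam * ‖q‖ := by
    rw [hz, inner_sub_right, real_inner_smul_right, real_inner_self_eq_norm_sq]
    have h : lam / ‖q‖ * ‖q‖ ^ 2 = lam * ‖q‖ := by
      field_simp
    rw [h]
  rw [hqz] at h1
  have key : τ * (-yE) ≤ lam * (‖q‖ - L) := by
    have hmul := mul_le_mul_of_nonneg_left hτ hynn
    have hlameq : lam * (-σ) = (-yE) * ‖q‖ := by
      rw [hlam]
      exact div_mul_cancel₀ _ (neg_ne_zero.2 hσ0)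
    have h6 : τ * (-yE) * (-σ) ≤ lam * (‖q‖ - L) * (-σ) := by
      calc τ * (-yE) * (-σ) = (-yE) * (τ * (-σ)) := by ring
      _ ≤ (-yE) * (‖q‖ * (‖q‖ - L)) := hmul
      _ = lam * (‖q‖ - L) * (-σ) := by linear_combination (-(‖q‖ - (L : ℝ))) * hlameq
    exact le_of_mul_le_mul_right h6 hσ'
  have hqy : ⟪q + τ • eLast n, y⟫_ℝ = ⟪q, y⟫_ℝ + τ * yE := by
    have hcy : ⟪eLast n, y⟫_ℝ = yE := by rw [hyE]; exact real_inner_comm _ _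
    rw [inner_add_left, real_inner_smul_left, hcy]
  have hεz : (ε / C) * ‖z‖ ≤ ε * ‖y‖ := by
    calc (ε / C) * ‖z‖ ≤ (ε / C) * (C * ‖y‖) :=
          mul_le_mul_of_nonneg_left hzC (div_nonneg hε.le hC0.le)
    _ = ε * ‖y‖ := by field_simp
  rw [hqy]
  linarith [h1, h2, key, hεz]

/-- The vertical segment lemma: the superdifferential contains the whole truncated
vertical ray above a given element, down to norm `L`. -/
lemma ray_mem {n : ℕ} {r : ℝ} (hr : 0 < r) {v : En (n+1) → ℝ} {L : ℝ≥0} (hL : 0 < (L : ℝ))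
    (hv : LipschitzOnWith L v (ball 0 r ∩ {x : En (n + 1) | ⟪x, eLast n⟫_ℝ ≤ 0}))
    {ph : En (n+1)} (hphe : ⟪ph, eLast n⟫_ℝ = 0)
    {t₀ m : ℝ} (ht₀0 : 0 ≤ t₀) (ht₀sq : ‖ph‖^2 + t₀^2 = (L:ℝ)^2)
    (hm : ph - m • eLast n ∈ supDiff (ball 0 r ∩ {x : En (n + 1) | ⟪x, eLast n⟫_ℝ ≤ 0}) v 0)
    (t1 : ℝ) (ht1 : t1 ∈ Icc t₀ m) :
    ph - t1 • eLast n ∈ supDiff (ball 0 r ∩ {x : En (n + 1) | ⟪x, eLast n⟫_ℝ ≤ 0}) v 0 := by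
  have hQnorm : ∀ t : ℝ, ‖ph - t • eLast n‖^2 = ‖ph‖^2 + t^2 := by
    intro t
    rw [norm_sub_sq_real, real_inner_smul_right, hphe, norm_smul, Real.norm_eq_abs,
      norm_eLast, mul_one, sq_abs]
    ring
  set V := ball (0 : En (n+1)) r ∩ {x : En (n + 1) | ⟪x, eLast n⟫_ℝ ≤ 0} with hV
  set A := {t : ℝ | t ∈ Icc t1 m ∧ ph - t • eLast n ∈ supDiff V v 0} with hA
  have hmA : m ∈ A := ⟨⟨ht1.2, le_refl m⟩, hm⟩
  have hAne : A.Nonempty := ⟨m, hmA⟩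
  have hbdd : BddBelow A := ⟨t1, fun t ht => ht.1.1⟩
  set c := sInf A with hc
  have hct1 : t1 ≤ c := le_csInf hAne (fun t ht => ht.1.1)
  have hcm : c ≤ m := csInf_le hbdd hmA
  clear_value c
  have hcD : ph - c • eLast n ∈ supDiff V v 0 := by
    have hB : IsClosed {t : ℝ | ph - t • eLast n ∈ supDiff V v 0} := by
      have hcont : Continuous fun t : ℝ => ph - t • eLast n := by fun_prop
      exact IsClosed.preimage hcont (supDiff_isClosed V v 0)
    have hsub : A ⊆ {t : ℝ | ph - t • eLast n ∈ supDiff V v 0} := fun t ht => ht.2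
    have hmemcl := csInf_mem_closure hAne hbdd
    rw [← hc] at hmemcl
    exact hB.closure_subset ((closure_mono hsub) hmemcl)
  rcases eq_or_lt_of_le hct1 with heq | hlt
  · rw [heq]; exact hcD
  · exfalso
    have hct₀ : t₀ < c := lt_of_le_of_lt ht1.1 hlt
    have hc0 : 0 < c := lt_of_le_of_lt ht₀0 hct₀
    have hQcσ : ⟪ph - c • eLast n, eLast n⟫_ℝ = -c := by
      rw [inner_sub_left, real_inner_smul_left, hphe, inner_eLast_self]
      ring
    have hQcn : (L:ℝ) < ‖ph - c • eLast n‖ := by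
      have h1 := hQnorm c
      nlinarith [norm_nonneg (ph - c • eLast n), hL, norm_nonneg ph]
    set N := ‖ph - c • eLast n‖ with hN
    clear_value N
    set τ := min (c - t1) (N * (N - L) / c) with hτd
    have hτpos : 0 < τ := by
      apply lt_min (by linarith)
      have h : 0 < N * (N - L) := mul_pos (by linarith) (by linarith)
      positivity
    have hτc : τ * c ≤ N * (N - L) := by
      have h := min_le_right (c - t1) (N * (N - L) / c)
      rw [← hτd, le_div_iff₀ hc0] at h
      exact h
    clear_value τ
    have hstep := step_lemma hr hv hcD (by rw [hQcσ]; linarith) hτpos.le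
      (by rw [hQcσ, neg_neg, ← hN]; exact hτc)
    have heqQ : (ph - c • eLast n) + τ • eLast n = ph - (c - τ) • eLast n := by
      rw [sub_smul]; abel
    rw [heqQ] at hstep
    have hmem : (c - τ) ∈ A := by
      refine ⟨⟨?_, ?_⟩, hstep⟩
      · have h := min_le_left (c - t1) (N * (N - L) / c)
        rw [← hτd] at h
        linarith
      · linarith
    have hfin := csInf_le hbdd hmem
    rw [← hc] at hfin
    linarith

set_option maxHeartbeats 1000000 in
/-- Lemma 2.3: stability of the oblique derivative bound under a small
perturbation of the oblique direction, at a boundary point of the half ball. -/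
theorem oblique_bound_perturbation
    {n : ℕ} (r : ℝ) (hr : 0 < r)
    (v : En (n + 1) → ℝ) (L : ℝ≥0) (hL : 0 < (L : ℝ))
    (hv : LipschitzOnWith L v (ball 0 r ∩ {x : En (n + 1) | ⟪x, eLast n⟫_ℝ ≤ 0}))
    (γ₁ γ₂ : En (n + 1)) (ε : ℝ) (hε : 0 < ε)
    (hγ₁ : 0 ≤ ⟪γ₁, eLast n⟫_ℝ) (hγ₂ : 0 ≤ ⟪γ₂, eLast n⟫_ℝ)
    (hγ : ‖γ₁ - γ₂‖ ≤ ε / L)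
    (a : ℝ)
    (hmin : ∀ q ∈ supDiff (ball 0 r ∩ {x : En (n + 1) | ⟪x, eLast n⟫_ℝ ≤ 0}) v 0,
      min (‖q‖ - L) (⟪γ₁, q⟫_ℝ - a) ≤ 0)
    (p : En (n + 1))
    (hp : p ∈ supDiff (ball 0 r ∩ {x : En (n + 1) | ⟪x, eLast n⟫_ℝ ≤ 0}) v 0)
    (hpa : ⟪γ₁, p⟫_ℝ ≤ a) :
    ⟪γ₂, p⟫_ℝ ≤ a + ε := by
  set d := γ₂ - γ₁ with hd
  clear_value d
  have hdL : ‖d‖ * L ≤ ε := by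
    have h1 : ‖d‖ ≤ ε / L := by rw [hd, norm_sub_rev]; exact hγ
    have h2 : ‖d‖ * L ≤ (ε / L) * L := mul_le_mul_of_nonneg_right h1 hL.le
    calc ‖d‖ * L ≤ (ε / L) * L := h2
    _ = ε := by field_simp
  have hγ₂p : ⟪γ₂, p⟫_ℝ = ⟪γ₁, p⟫_ℝ + ⟪d, p⟫_ℝ := by
    rw [hd, inner_sub_left]; ring
  rcases le_or_gt ‖p‖ (L : ℝ) with hpL | hpL
  · -- easy case : ‖p‖ ≤ L
    have h2 : ⟪d, p⟫_ℝ ≤ ‖d‖ * ‖p‖ := real_inner_le_norm d p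
    have h3 : ‖d‖ * ‖p‖ ≤ ‖d‖ * L := mul_le_mul_of_nonneg_left hpL (norm_nonneg d)
    linarith
  · -- hard case : ‖p‖ > L
    set s := ⟪p, eLast n⟫_ℝ with hs
    clear_value s
    set ph := p - s • eLast n with hph
    clear_value ph
    have hphe : ⟪ph, eLast n⟫_ℝ = 0 := by
      rw [hph, inner_sub_left, real_inner_smul_left, inner_eLast_self, ← hs]
      ring
    have hpdec : p = ph + s • eLast n := by rw [hph]; abel
    set b := ‖ph‖ with hb
    have hb0 : 0 ≤ b := norm_nonneg ph
    clear_value b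
    have hdir : ∀ u : En (n+1), 0 ≤ ⟪u, eLast n⟫_ℝ → ⟪p, u⟫_ℝ ≤ L * ‖u‖ :=
      fun u hu => dir_bound hr hv hp u hu
    have hbL : b ≤ L := by
      have h := hdir ph (le_of_eq hphe.symm)
      have hpph : ⟪p, ph⟫_ℝ = b ^ 2 := by
        have hcph : ⟪eLast n, ph⟫_ℝ = 0 := by rw [real_inner_comm]; exact hphe
        rw [hpdec, inner_add_left, real_inner_smul_left, hcph, real_inner_self_eq_norm_sq, ← hb]
        ring
      rw [hpph, ← hb] at h
      nlinarith [hL]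
    have hsneg : s < 0 := by
      by_contra h
      push_neg at h
      have h2 := hdir p (by rw [← hs]; exact h)
      rw [real_inner_self_eq_norm_sq] at h2
      nlinarith [norm_nonneg p]
    have hnorms : ‖p‖ ^ 2 = b ^ 2 + s ^ 2 := by
      rw [hpdec, norm_add_sq_real, real_inner_smul_right, hphe, norm_smul, Real.norm_eq_abs,
        norm_eLast, mul_one, sq_abs, ← hb]
      ring
    set m := -s with hm
    clear_value m
    have hm0 : 0 < m := by rw [hm]; linarith
    have ht0sq' : 0 ≤ (L : ℝ) ^ 2 - b ^ 2 := by nlinarith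
    set t₀ := Real.sqrt ((L : ℝ) ^ 2 - b ^ 2) with ht₀
    have ht₀0 : 0 ≤ t₀ := Real.sqrt_nonneg _
    have ht₀sq : b ^ 2 + t₀ ^ 2 = (L : ℝ) ^ 2 := by
      rw [ht₀, Real.sq_sqrt ht0sq']; ring
    clear_value t₀
    have ht₀m : t₀ < m := by
      nlinarith [hpL, hnorms, hm0, ht₀0, hL]
    -- membership of the vertical segment
    have hQmem : ∀ t, t ∈ Icc t₀ m →
        ph - t • eLast n ∈ supDiff (ball 0 r ∩ {x : En (n + 1) | ⟪x, eLast n⟫_ℝ ≤ 0}) v 0 := by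
      intro t ht
      apply ray_mem hr hL hv hphe ht₀0 (by rw [← hb]; exact ht₀sq) ?_ t ht
      have : ph - m • eLast n = p := by rw [hm, hpdec]; module
      rw [this]; exact hp
    set g := ⟪γ₁, eLast n⟫_ℝ with hg
    clear_value g
    have hg0 : 0 ≤ g := hγ₁
    have hγ₁Q : ∀ t : ℝ, ⟪γ₁, ph - t • eLast n⟫_ℝ = ⟪γ₁, ph⟫_ℝ - t * g := by
      intro t
      rw [inner_sub_right, real_inner_smul_right, ← hg]
    have hkey : ∀ t, t₀ < t → t ≤ m → ⟪γ₁, ph⟫_ℝ - t * g ≤ a := by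
      intro t ht1 ht2
      have hQ := hQmem t ⟨ht1.le, ht2⟩
      have hmin' := hmin _ hQ
      have hQn : ‖ph - t • eLast n‖ ^ 2 = b ^ 2 + t ^ 2 := by
        rw [norm_sub_sq_real, real_inner_smul_right, hphe, norm_smul, Real.norm_eq_abs,
          norm_eLast, mul_one, sq_abs, ← hb]
        ring
      have hN : (L : ℝ) < ‖ph - t • eLast n‖ := by
        nlinarith [norm_nonneg (ph - t • eLast n), hL, ht₀0]
      rw [hγ₁Q] at hmin'
      rcases min_le_iff.1 hmin' with h | h
      · linarith
      · linarith
    have hC2 : ⟪γ₁, ph⟫_ℝ ≤ a + t₀ * g := by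
      rcases eq_or_lt_of_le hg0 with hgz | hgz
      · have h := hkey m ht₀m le_rfl
        nlinarith [hgz]
      · by_contra hcon
        push_neg at hcon
        set t := min m (t₀ + (⟪γ₁, ph⟫_ℝ - a - t₀ * g) / (2 * g)) with htdef
        have htpos : t₀ < t := by
          apply lt_min ht₀m
          have : 0 < (⟪γ₁, ph⟫_ℝ - a - t₀ * g) / (2 * g) := by
            apply div_pos (by linarith) (by linarith)
          linarith
        have htm : t ≤ m := min_le_left _ _
        have h := hkey t htpos htm
        have htle : t ≤ t₀ + (⟪γ₁, ph⟫_ℝ - a - t₀ * g) / (2 * g) := min_le_right _ _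
        clear_value t
        have hgap : (⟪γ₁, ph⟫_ℝ - a - t₀ * g) / (2 * g) * g = (⟪γ₁, ph⟫_ℝ - a - t₀ * g) / 2 := by
          field_simp
        nlinarith [mul_le_mul_of_nonneg_right htle hg0]
    -- final assembly
    have hfin1 : ⟪γ₂, p⟫_ℝ = ⟪γ₂, ph⟫_ℝ + s * ⟪γ₂, eLast n⟫_ℝ := by
      nth_rewrite 1 [hpdec]
      rw [inner_add_right, real_inner_smul_right]
    have hfin2 : ⟪γ₂, ph⟫_ℝ = ⟪γ₁, ph⟫_ℝ + ⟪d, ph⟫_ℝ := by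
      rw [hd, inner_sub_left]; ring
    have hdph : ⟪d, ph⟫_ℝ = ⟪d, ph - t₀ • eLast n⟫_ℝ + t₀ * ⟪d, eLast n⟫_ℝ := by
      rw [inner_sub_right, real_inner_smul_right]; ring
    have hde : ⟪γ₂, eLast n⟫_ℝ = g + ⟪d, eLast n⟫_ℝ := by
      rw [hd, inner_sub_left, ← hg]; ring
    have hq0norm : ‖ph - t₀ • eLast n‖ = L := by
      have h1 : ‖ph - t₀ • eLast n‖ ^ 2 = b ^ 2 + t₀ ^ 2 := by
        rw [norm_sub_sq_real, real_inner_smul_right, hphe, norm_smul, Real.norm_eq_abs,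
          norm_eLast, mul_one, sq_abs, ← hb]
        ring
      have h2 : ‖ph - t₀ • eLast n‖ ^ 2 = (L : ℝ) ^ 2 := by rw [h1, ht₀sq]
      nlinarith [norm_nonneg (ph - t₀ • eLast n), hL]
    have hdq0 : ⟪d, ph - t₀ • eLast n⟫_ℝ ≤ ‖d‖ * L := by
      calc ⟪d, ph - t₀ • eLast n⟫_ℝ ≤ ‖d‖ * ‖ph - t₀ • eLast n‖ := real_inner_le_norm _ _
      _ = ‖d‖ * L := by rw [hq0norm]
    have hlast : t₀ * ⟪γ₂, eLast n⟫_ℝ + s * ⟪γ₂, eLast n⟫_ℝ ≤ 0 := by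
      have h1 : t₀ + s ≤ 0 := by rw [hm] at ht₀m; linarith
      nlinarith [hγ₂]
    have hexp : t₀ * ⟪γ₂, eLast n⟫_ℝ = t₀ * g + t₀ * ⟪d, eLast n⟫_ℝ := by
      rw [hde]; ring
    linarith [hC2, hdq0, hdL, hlast, hfin1, hfin2, hdph, hde, hexp]
end
end

section
/- There exists a function ζ ∈ C^∞(ℝⁿ₊ × ℝⁿ, ℝ), where ℝⁿ₊ := {ξ ∈ ℝⁿ : eₙ·ξ > 0}, such that: (i) ζ(ξ, t z) = t² ζ(ξ, z) for all ξ ∈ ℝⁿ₊, z ∈ ℝⁿ, t ∈ ℝ; (ii) ζ(ξ, z) > 0 for all ξ ∈ ℝⁿ₊ and z ∈ ℝⁿ \ {0}; (iii) ξ·D_z ζ(ξ, z) = (eₙ·ξ)(eₙ·z) for all ξ ∈ ℝⁿ₊ and z ∈ ℝⁿ. -/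
open Set Metric Filter MeasureTheory
open scoped Topology NNReal InnerProductSpace

noncomputable section

variable {n : ℕ}

/-!
For `ξ ≠ 0`, `⟪z, z⟫ - ⟪ξ, z⟫² / ⟪ξ, ξ⟫` is the squared norm of the component of `z` orthogonal
to `ξ`: a nonnegative quadratic form in `z` vanishing exactly on `ℝ ξ`, whose `z`-gradient is
orthogonal to `ξ`. Adding `(eₙ·z)² / 2` adds `(eₙ·z) eₙ` to the gradient, hence exactly
`(eₙ·ξ)(eₙ·z)` to `ξ·D_z ζ`, and makes the form positive definite, since `eₙ·ξ ≠ 0` means that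
`eₙ·z` does not vanish on `ℝ ξ ∖ {0}`.
-/

section ZetaForm

variable {E : Type*} [NormedAddCommGroup E] [InnerProductSpace ℝ E]

def zetaForm (e ξ z : E) : ℝ := ⟪z, z⟫_ℝ - ⟪ξ, z⟫_ℝ ^ 2 / ⟪ξ, ξ⟫_ℝ + ⟪e, z⟫_ℝ ^ 2 / 2

theorem contDiffOn_zetaForm (e : E) {k : WithTop ℕ∞} :
    ContDiffOn ℝ k (fun q : E × E => zetaForm e q.1 q.2) {q | q.1 ≠ 0} := by
  have hξξ : ContDiff ℝ k fun q : E × E => ⟪q.1, q.1⟫_ℝ := contDiff_fst.inner ℝ contDiff_fst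
  refine ((contDiff_snd.inner ℝ contDiff_snd).contDiffOn.sub
    (((contDiff_fst.inner ℝ contDiff_snd).pow 2).contDiffOn.div hξξ.contDiffOn ?_)).add
    (((contDiff_const.inner ℝ contDiff_snd).pow 2).div_const 2).contDiffOn
  intro q hq
  exact inner_self_ne_zero.2 hq

theorem zetaForm_smul_right (e ξ z : E) (t : ℝ) :
    zetaForm e ξ (t • z) = t ^ 2 * zetaForm e ξ z := by
  simp only [zetaForm, real_inner_smul_right, real_inner_smul_left]
  ring

theorem inner_self_sub_sq_div_eq_norm_sq (ξ z : E) :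
    ⟪z, z⟫_ℝ - ⟪ξ, z⟫_ℝ ^ 2 / ⟪ξ, ξ⟫_ℝ = ‖z - (⟪ξ, z⟫_ℝ / ⟪ξ, ξ⟫_ℝ) • ξ‖ ^ 2 := by
  rcases eq_or_ne ξ 0 with rfl | hξ
  · simp
  have hξξ : ⟪ξ, ξ⟫_ℝ ≠ 0 := inner_self_ne_zero.2 hξ
  rw [← real_inner_self_eq_norm_sq, inner_sub_left, inner_sub_right, inner_sub_right,
    real_inner_smul_left, real_inner_smul_left, real_inner_smul_right, real_inner_smul_right,
    real_inner_comm z ξ]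
  field_simp
  ring

theorem zetaForm_pos {e ξ z : E} (heξ : ⟪e, ξ⟫_ℝ ≠ 0) (hz : z ≠ 0) : 0 < zetaForm e ξ z := by
  rw [zetaForm, inner_self_sub_sq_div_eq_norm_sq]
  rcases eq_or_ne ⟪e, z⟫_ℝ 0 with hez | hez
  · have hperp : z - (⟪ξ, z⟫_ℝ / ⟪ξ, ξ⟫_ℝ) • ξ ≠ 0 := by
      intro h
      rw [sub_eq_zero] at h
      have hc : ⟪ξ, z⟫_ℝ / ⟪ξ, ξ⟫_ℝ = 0 := by
        have := congrArg (⟪e, ·⟫_ℝ) h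
        simp only [real_inner_smul_right, hez] at this
        exact (mul_eq_zero.1 this.symm).resolve_right heξ
      exact hz (by rw [h, hc, zero_smul])
    have := norm_pos_iff.2 hperp
    rw [hez]
    positivity
  · have := norm_nonneg (z - (⟪ξ, z⟫_ℝ / ⟪ξ, ξ⟫_ℝ) • ξ)
    positivity

variable [CompleteSpace E]

theorem hasGradientAt_zetaForm (e ξ z : E) :
    HasGradientAt (zetaForm e ξ)
      ((2 : ℝ) • z - (2 * ⟪ξ, z⟫_ℝ / ⟪ξ, ξ⟫_ℝ) • ξ + ⟪e, z⟫_ℝ • e) z := by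
  rw [hasGradientAt_iff_hasFDerivAt]
  have hzz : HasFDerivAt (fun y : E => ⟪y, y⟫_ℝ)
      ((fderivInnerCLM ℝ (z, z)).comp
        ((ContinuousLinearMap.id ℝ E).prod (ContinuousLinearMap.id ℝ E))) z :=
    (hasFDerivAt_id z).inner ℝ (hasFDerivAt_id z)
  have hξ := (innerSL ℝ ξ).hasFDerivAt (x := z)
  have he := (innerSL ℝ e).hasFDerivAt (x := z)
  have h := (hzz.sub ((hξ.pow 2).mul_const (⟪ξ, ξ⟫_ℝ)⁻¹)).add ((he.pow 2).mul_const (2 : ℝ)⁻¹)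
  simp only [← div_eq_mul_inv] at h
  refine h.congr_fderiv ?_
  ext v
  simp only [add_apply, sub_apply, smul_apply, ContinuousLinearMap.comp_apply,
    ContinuousLinearMap.prod_apply, ContinuousLinearMap.id_apply, fderivInnerCLM_apply,
    coe_innerSL_apply, InnerProductSpace.toDual_apply_apply, inner_add_left, inner_sub_left,
    real_inner_smul_left, real_inner_comm z v, smul_eq_mul, nsmul_eq_mul]
  ring

theorem inner_gradient_zetaForm (e ξ z : E) :
    ⟪ξ, gradient (zetaForm e ξ) z⟫_ℝ = ⟪e, ξ⟫_ℝ * ⟪e, z⟫_ℝ := by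
  rcases eq_or_ne ξ 0 with rfl | hξ
  · simp
  have hξξ : ⟪ξ, ξ⟫_ℝ ≠ 0 := inner_self_ne_zero.2 hξ
  rw [(hasGradientAt_zetaForm e ξ z).gradient, inner_add_right, inner_sub_right,
    real_inner_smul_right, real_inner_smul_right, real_inner_smul_right,
    real_inner_comm ξ e, div_mul_cancel₀ _ hξξ]
  ring

end ZetaForm

/-- Lemma 2.6: existence of a smooth function `ζ` on `ℝⁿ₊ × ℝⁿ`,
quadratically homogeneous and positive definite in `z`, with
`ξ·D_zζ(ξ,z) = (eₙ·ξ)(eₙ·z)`. -/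
theorem exists_zeta
    (n : ℕ) :
    ∃ ζ : En (n + 1) → En (n + 1) → ℝ,
      ContDiffOn ℝ (⊤ : ℕ∞) (fun q : En (n + 1) × En (n + 1) => ζ q.1 q.2)
        ({ξ : En (n + 1) | 0 < ⟪eLast n, ξ⟫_ℝ} ×ˢ univ) ∧
      (∀ ξ : En (n + 1), 0 < ⟪eLast n, ξ⟫_ℝ → ∀ z : En (n + 1), ∀ t : ℝ,
        ζ ξ (t • z) = t ^ 2 * ζ ξ z) ∧
      (∀ ξ : En (n + 1), 0 < ⟪eLast n, ξ⟫_ℝ → ∀ z : En (n + 1), z ≠ 0 → 0 < ζ ξ z) ∧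
      (∀ ξ : En (n + 1), 0 < ⟪eLast n, ξ⟫_ℝ → ∀ z : En (n + 1),
        ⟪ξ, gradient (fun y => ζ ξ y) z⟫_ℝ = ⟪eLast n, ξ⟫_ℝ * ⟪eLast n, z⟫_ℝ) := by
  refine ⟨zetaForm (eLast n), ?_, fun ξ _ z t => zetaForm_smul_right _ ξ z t,
    fun ξ hξ z hz => zetaForm_pos hξ.ne' hz, fun ξ _ z => inner_gradient_zetaForm _ ξ z⟩
  exact (contDiffOn_zetaForm _).mono fun q hq (h : q.1 = 0) => by simp [h] at hq
end
end

section
/- Let r > 0, L > 0, ε > 0, and set K := B_r ∩ {x ∈ ℝⁿ : x·eₙ ≤ 0} and Γ := B_r ∩ {x : x·eₙ = 0}. Let G be continuous on K × ℝⁿ with {p : G(x,p) ≤ 0} ⊂ B̄_L for every x ∈ K. Let γ, γ_ε : Γ → ℝⁿ and g, g_ε : Γ → ℝ satisfy γ(x)·eₙ > 0, γ_ε(x)·eₙ ≥ 0, |γ_ε(x) − γ(x)| ≤ ε/L and |g_ε(x) − g(x)| ≤ ε for all x ∈ Γ. Let u : K → ℝ be Lipschitz with constant L and assume: G(x,p)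 ≤ 0 for all x ∈ B_r ∩ {x·eₙ < 0} and p ∈ D⁺u(x), and min{G(x,p), γ(x)·p − g(x)} ≤ 0 for all x ∈ Γ and p ∈ D⁺_K u(x). Then min{G(x,p), γ_ε(x)·p − g_ε(x) − 2ε} ≤ 0 for all x ∈ Γ and p ∈ D⁺_K u(x). -/
open Set Metric Filter MeasureTheory
open scoped Topology NNReal InnerProductSpace

noncomputable section

variable {n : ℕ}

section Helpers

variable {m : ℕ} {V : Set (En m)} {u : En m → ℝ} {x p e : En m}

lemma supDiff_mem_sub (he : ∀ y ∈ V, ⟪y - x, e⟫_ℝ ≤ 0) {μ : ℝ} (hμ : 0 ≤ μ)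
    (hp : p ∈ supDiff V u x) : p - μ • e ∈ supDiff V u x := by
  intro ε hε
  obtain ⟨δ, hδ, h⟩ := hp ε hε
  refine ⟨δ, hδ, fun y hy hyd => ?_⟩
  have h1 := h y hy hyd
  have h2 := he y hy
  have h3 : ⟪p - μ • e, y - x⟫_ℝ = ⟪p, y - x⟫_ℝ - μ * ⟪y - x, e⟫_ℝ := by
    rw [inner_sub_left, real_inner_smul_left, real_inner_comm e (y - x)]
  nlinarith [mul_nonneg hμ (neg_nonneg.2 h2)]

lemma supDiff_inner_ge {L : ℝ≥0} (hu : LipschitzOnWith L u V) (hx : x ∈ V)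
    (hp : p ∈ supDiff V u x) (w : En m) {t₀ : ℝ} (ht₀ : 0 < t₀)
    (hw : ∀ t : ℝ, 0 < t → t < t₀ → x + t • w ∈ V) : -((L : ℝ) * ‖w‖) ≤ ⟪p, w⟫_ℝ := by
  refine le_of_forall_pos_le_add fun ε hε => ?_
  have hw1 : (0:ℝ) < ‖w‖ + 1 := by positivity
  obtain ⟨δ, hδ, h⟩ := hp (ε / (‖w‖ + 1)) (by positivity)
  set t : ℝ := min t₀ (δ / (‖w‖ + 1)) / 2 with htdef
  have ht : 0 < t := by positivity
  have htlt : t < t₀ := by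
    have : t ≤ t₀ / 2 := by
      apply div_le_div_of_nonneg_right _ (by norm_num)
      exact min_le_left _ _
    linarith
  have htd : t * ‖w‖ < δ := by
    have h1 : t ≤ δ / (‖w‖ + 1) / 2 := by
      apply div_le_div_of_nonneg_right _ (by norm_num)
      exact min_le_right _ _
    have h2 : t * ‖w‖ < t * (‖w‖ + 1) := by nlinarith
    have h3 : t * (‖w‖ + 1) ≤ δ / (‖w‖ + 1) / 2 * (‖w‖ + 1) := by nlinarith
    have h4 : δ / (‖w‖ + 1) / 2 * (‖w‖ + 1) = δ / 2 := by field_simp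
    linarith
  have hyV : x + t • w ∈ V := hw t ht htlt
  have hnorm : ‖x + t • w - x‖ = t * ‖w‖ := by
    rw [add_sub_cancel_left, norm_smul, Real.norm_eq_abs, abs_of_pos ht]
  have hsup := h (x + t • w) hyV (by rw [hnorm]; exact htd)
  rw [hnorm, add_sub_cancel_left, real_inner_smul_right] at hsup
  have hlip : u x - u (x + t • w) ≤ (L : ℝ) * (t * ‖w‖) := by
    have := hu.dist_le_mul x hx _ hyV
    rw [Real.dist_eq, dist_eq_norm] at this
    have h5 : ‖x - (x + t • w)‖ = t * ‖w‖ := by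
      rw [show x - (x + t • w) = -(t • w) by abel, norm_neg, norm_smul,
        Real.norm_eq_abs, abs_of_pos ht]
    rw [h5] at this
    linarith [(abs_le.1 this).2]
  have key : -((L : ℝ) * (t * ‖w‖)) ≤ t * ⟪p, w⟫_ℝ + ε / (‖w‖ + 1) * (t * ‖w‖) := by
    linarith
  have hfrac : ε / (‖w‖ + 1) * ‖w‖ ≤ ε := by
    rw [div_mul_eq_mul_div, div_le_iff₀ hw1]
    nlinarith
  nlinarith

set_option maxHeartbeats 1000000 in
lemma claimB {L : ℝ≥0} {r L' : ℝ}
    (hVdef : V = ball (0 : En m) r ∩ {y | ⟪y, e⟫_ℝ ≤ 0})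
    (he : ‖e‖ = 1) (hL' : (L : ℝ) < L')
    (hx : x ∈ ball (0 : En m) r) (hxe : ⟪x, e⟫_ℝ = 0)
    (hu : LipschitzOnWith L u V)
    (hp : p ∈ supDiff V u x)
    (hP : ‖p - ⟪p, e⟫_ℝ • e‖ ≤ L) :
    (p - ⟪p, e⟫_ℝ • e) - Real.sqrt (L' ^ 2 - ‖p - ⟪p, e⟫_ℝ • e‖ ^ 2) • e ∈ supDiff V u x := by
  have hL0 : (0:ℝ) ≤ L := L.coe_nonneg
  obtain ⟨q, hqdef⟩ : ∃ q, q = (p - ⟪p, e⟫_ℝ • e) -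
      Real.sqrt (L' ^ 2 - ‖p - ⟪p, e⟫_ℝ • e‖ ^ 2) • e := ⟨_, rfl⟩
  rw [← hqdef]
  obtain ⟨a, ha⟩ : ∃ a : ℝ, a = ⟪p, e⟫_ℝ := ⟨_, rfl⟩
  obtain ⟨P, hPdef⟩ : ∃ P, P = p - a • e := ⟨_, rfl⟩
  rw [← ha, ← hPdef] at hqdef hP
  obtain ⟨c, hcdef⟩ : ∃ c : ℝ, c = Real.sqrt (L' ^ 2 - ‖P‖ ^ 2) := ⟨_, rfl⟩
  rw [← hcdef] at hqdef
  have hee : ⟪e, e⟫_ℝ = 1 := by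
    rw [real_inner_self_eq_norm_sq, he]; norm_num
  have hPe : ⟪P, e⟫_ℝ = 0 := by
    rw [hPdef, inner_sub_left, real_inner_smul_left, hee, ha]; ring
  have hEP : ⟪e, P⟫_ℝ = 0 := by rw [real_inner_comm]; exact hPe
  have hpPe : p = P + a • e := by rw [hPdef]; abel
  have hsq : (0:ℝ) < L' ^ 2 - ‖P‖ ^ 2 := by nlinarith [norm_nonneg P]
  have hc : 0 < c := hcdef ▸ Real.sqrt_pos.2 hsq
  have hc2 : c ^ 2 = L' ^ 2 - ‖P‖ ^ 2 := hcdef ▸ Real.sq_sqrt hsq.le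
  obtain ⟨C, hCdef⟩ : ∃ C : ℝ, C = 1 + (L : ℝ) / c := ⟨_, rfl⟩
  have hC : 0 < C := by rw [hCdef]; positivity
  intro ε hε
  obtain ⟨δ₁, hδ₁pos, hδ₁⟩ := hp (ε / C) (by positivity)
  have hrx : 0 < r - ‖x‖ := by
    rw [mem_ball, dist_eq_norm, sub_zero] at hx; linarith
  refine ⟨min (δ₁ / C) ((r - ‖x‖) / C), by positivity, fun y hy hyd => ?_⟩
  obtain ⟨t, htdef⟩ : ∃ t : ℝ, t = -⟪y, e⟫_ℝ := ⟨_, rfl⟩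
  have ht : 0 ≤ t := by
    have h0 : ⟪y, e⟫_ℝ ≤ 0 := by rw [hVdef] at hy; exact hy.2
    rw [htdef]; linarith
  obtain ⟨v, hvdef⟩ : ∃ v, v = y - x := ⟨_, rfl⟩
  rw [← hvdef]
  rw [← hvdef] at hyd
  have hve : ⟪v, e⟫_ℝ = -t := by
    rw [hvdef, inner_sub_left, hxe, htdef]; ring
  have hEv : ⟪e, v⟫_ℝ = -t := by rw [real_inner_comm]; exact hve
  obtain ⟨W, hWdef⟩ : ∃ W, W = v + t • e := ⟨_, rfl⟩
  have hWe : ⟪W, e⟫_ℝ = 0 := by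
    rw [hWdef, inner_add_left, real_inner_smul_left, hee, hve]; ring
  have hEW : ⟪e, W⟫_ℝ = 0 := by rw [real_inner_comm]; exact hWe
  have hWnorm : ‖W‖ ≤ ‖v‖ := by
    have h1 : ‖W‖ ^ 2 = ‖v‖ ^ 2 - t ^ 2 := by
      rw [hWdef, norm_add_sq_real, real_inner_smul_right, hve, norm_smul,
        Real.norm_eq_abs, abs_of_nonneg ht, he]
      ring
    nlinarith [norm_nonneg W, norm_nonneg v, sq_nonneg t]
  have htv : t ≤ ‖v‖ := by
    have h2 := abs_real_inner_le_norm v e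
    rw [hve, he, mul_one, abs_neg, abs_of_nonneg ht] at h2
    exact h2
  obtain ⟨z, hzdef⟩ : ∃ z, z = x + W - (t / c) • P := ⟨_, rfl⟩
  have hzx : z - x = W - (t / c) • P := by rw [hzdef]; abel
  have hzxnorm : ‖z - x‖ ≤ C * ‖v‖ := by
    rw [hzx]
    calc ‖W - (t / c) • P‖ ≤ ‖W‖ + ‖(t / c) • P‖ := norm_sub_le _ _
    _ = ‖W‖ + (t / c) * ‖P‖ := by
        rw [norm_smul, Real.norm_eq_abs, abs_of_nonneg (by positivity)]
    _ ≤ ‖v‖ + ((L:ℝ) / c) * ‖v‖ := by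
        have h3 : (t / c) * ‖P‖ ≤ ((L:ℝ) / c) * ‖v‖ := by
          rw [div_mul_eq_mul_div, div_mul_eq_mul_div, div_le_div_iff₀ hc hc]
          have hnum : t * ‖P‖ ≤ (L:ℝ) * ‖v‖ := by
            nlinarith [norm_nonneg P, norm_nonneg v]
          nlinarith [mul_le_mul_of_nonneg_right hnum hc.le]
        linarith
    _ = C * ‖v‖ := by rw [hCdef]; ring
  have hvd1 : ‖v‖ < δ₁ / C := lt_of_lt_of_le hyd (min_le_left _ _)
  have hvd2 : ‖v‖ < (r - ‖x‖) / C := lt_of_lt_of_le hyd (min_le_right _ _)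
  have hCv1 : C * ‖v‖ < δ₁ := by
    have := mul_lt_mul_of_pos_left hvd1 hC
    rwa [mul_div_cancel₀ _ hC.ne'] at this
  have hCv2 : C * ‖v‖ < r - ‖x‖ := by
    have := mul_lt_mul_of_pos_left hvd2 hC
    rwa [mul_div_cancel₀ _ hC.ne'] at this
  have hzK : z ∈ V := by
    rw [hVdef]
    refine ⟨?_, ?_⟩
    · rw [mem_ball, dist_eq_norm, sub_zero]
      have h1 : ‖z‖ ≤ ‖x‖ + ‖z - x‖ := by
        simpa using norm_add_le x (z - x)
      linarith
    · show ⟪z, e⟫_ℝ ≤ 0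
      have h4 : ⟪z, e⟫_ℝ = 0 := by
        rw [hzdef, inner_sub_left, inner_add_left, real_inner_smul_left, hxe, hWe, hPe]
        ring
      rw [h4]
  have hzδ₁ : ‖z - x‖ < δ₁ := lt_of_le_of_lt hzxnorm hCv1
  have hyz : y - z = -(t • e) + (t / c) • P := by
    rw [hzdef, hWdef, hvdef]; abel
  have hL'pos : (0:ℝ) < L' := lt_of_le_of_lt hL0 hL'
  have hyznorm : ‖y - z‖ = t * L' / c := by
    have h1 : ‖y - z‖ ^ 2 = (t * L' / c) ^ 2 := by
      rw [hyz, norm_add_sq_real, inner_neg_left, real_inner_smul_left,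
        real_inner_smul_right, hEP, norm_neg, norm_smul, norm_smul,
        Real.norm_eq_abs, Real.norm_eq_abs, abs_of_nonneg ht,
        abs_of_nonneg (by positivity : (0:ℝ) ≤ t / c), he]
      field_simp
      linear_combination (t^2) * hc2
    calc ‖y - z‖ = Real.sqrt (‖y - z‖ ^ 2) := (Real.sqrt_sq (norm_nonneg _)).symm
    _ = Real.sqrt ((t * L' / c) ^ 2) := by rw [h1]
    _ = t * L' / c := Real.sqrt_sq (by positivity)
  have hzsup : u z ≤ u x + ⟪p, z - x⟫_ℝ + (ε / C) * ‖z - x‖ := hδ₁ z hzK hzδ₁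
  have hpz : ⟪p, z - x⟫_ℝ = ⟪P, W⟫_ℝ - (t / c) * ‖P‖ ^ 2 := by
    rw [hzx, hpPe, inner_add_left, inner_sub_right, inner_sub_right,
      real_inner_smul_left, real_inner_smul_left, real_inner_smul_right,
      real_inner_smul_right, hEW, hEP, real_inner_self_eq_norm_sq]
    ring
  have htarget : ⟪q, v⟫_ℝ = ⟪P, W⟫_ℝ + c * t := by
    have hvW : v = W - t • e := by rw [hWdef]; abel
    simp only [hqdef, hvW, inner_sub_left, inner_sub_right, real_inner_smul_left,
      real_inner_smul_right, hPe, hEW, hee]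
    ring
  have hlip : u y ≤ u z + (L:ℝ) * ‖y - z‖ := by
    have hyV : y ∈ V := hy
    have h5 := hu.dist_le_mul y hyV z hzK
    rw [Real.dist_eq, dist_eq_norm] at h5
    linarith [(abs_le.1 h5).2]
  have hC3 : (ε / C) * ‖z - x‖ ≤ ε * ‖v‖ := by
    have h6 : (ε / C) * ‖z - x‖ ≤ (ε / C) * (C * ‖v‖) := by
      apply mul_le_mul_of_nonneg_left hzxnorm (by positivity)
    have h7 : (ε / C) * (C * ‖v‖) = ε * ‖v‖ := by field_simp
    linarith
  have hD : (L:ℝ) * (t * L' / c) - (t / c) * ‖P‖ ^ 2 ≤ c * t := by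
    have key : (L:ℝ) * (t * L') - t * ‖P‖ ^ 2 ≤ (c * t) * c := by
      have h8 : (c * t) * c = t * (L' ^ 2 - ‖P‖ ^ 2) := by
        rw [← hc2]; ring
      rw [h8]
      nlinarith [mul_nonneg ht (sub_nonneg.2 hL'.le)]
    have h9 : (L:ℝ) * (t * L' / c) - (t / c) * ‖P‖ ^ 2 =
        ((L:ℝ) * (t * L') - t * ‖P‖ ^ 2) / c := by field_simp
    have h10 : ((L:ℝ) * (t * L') - t * ‖P‖ ^ 2) / c ≤ (c * t) * c / c :=
      div_le_div_of_nonneg_right key hc.le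
    have h11 : (c * t) * c / c = c * t := by field_simp
    linarith
  rw [htarget]
  rw [hyznorm] at hlip
  rw [hpz] at hzsup
  linarith

end Helpers

set_option maxHeartbeats 1000000 in
/-- a Lipschitz subsolution of the oblique derivative problem on a half
ball remains a subsolution, up to `2ε`, for perturbed boundary data `γ_ε`, `g_ε`. -/
theorem subsolution_perturbed_boundary_data
    {n : ℕ} (r : ℝ) (hr : 0 < r) (L : ℝ≥0) (hL : 0 < (L : ℝ)) (ε : ℝ) (hε : 0 < ε)
    (G : En (n + 1) → En (n + 1) → ℝ)
    (hGcont : ContinuousOn (fun q : En (n + 1) × En (n + 1) => G q.1 q.2)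
      ((ball 0 r ∩ {x : En (n + 1) | ⟪x, eLast n⟫_ℝ ≤ 0}) ×ˢ univ))
    (hGlev : ∀ x ∈ ball (0 : En (n + 1)) r ∩ {x : En (n + 1) | ⟪x, eLast n⟫_ℝ ≤ 0},
      {p : En (n + 1) | G x p ≤ 0} ⊆ closedBall 0 (L : ℝ))
    (γ γε : En (n + 1) → En (n + 1)) (g gε : En (n + 1) → ℝ)
    (hγ : ∀ x ∈ ball (0 : En (n + 1)) r ∩ {x : En (n + 1) | ⟪x, eLast n⟫_ℝ = 0},
      0 < ⟪γ x, eLast n⟫_ℝ)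
    (hγε : ∀ x ∈ ball (0 : En (n + 1)) r ∩ {x : En (n + 1) | ⟪x, eLast n⟫_ℝ = 0},
      0 ≤ ⟪γε x, eLast n⟫_ℝ)
    (hγγε : ∀ x ∈ ball (0 : En (n + 1)) r ∩ {x : En (n + 1) | ⟪x, eLast n⟫_ℝ = 0},
      ‖γε x - γ x‖ ≤ ε / L)
    (hggε : ∀ x ∈ ball (0 : En (n + 1)) r ∩ {x : En (n + 1) | ⟪x, eLast n⟫_ℝ = 0},
      |gε x - g x| ≤ ε)
    (u : En (n + 1) → ℝ)
    (hu : LipschitzOnWith L u (ball 0 r ∩ {x : En (n + 1) | ⟪x, eLast n⟫_ℝ ≤ 0}))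
    (hsub₁ : ∀ x ∈ ball (0 : En (n + 1)) r ∩ {x : En (n + 1) | ⟪x, eLast n⟫_ℝ < 0},
      ∀ p ∈ supDiff (ball 0 r ∩ {y : En (n + 1) | ⟪y, eLast n⟫_ℝ < 0}) u x, G x p ≤ 0)
    (hsub₂ : ∀ x ∈ ball (0 : En (n + 1)) r ∩ {x : En (n + 1) | ⟪x, eLast n⟫_ℝ = 0},
      ∀ p ∈ supDiff (ball 0 r ∩ {y : En (n + 1) | ⟪y, eLast n⟫_ℝ ≤ 0}) u x,
        min (G x p) (⟪γ x, p⟫_ℝ - g x) ≤ 0) :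
    ∀ x ∈ ball (0 : En (n + 1)) r ∩ {x : En (n + 1) | ⟪x, eLast n⟫_ℝ = 0},
      ∀ p ∈ supDiff (ball 0 r ∩ {y : En (n + 1) | ⟪y, eLast n⟫_ℝ ≤ 0}) u x,
        min (G x p) (⟪γε x, p⟫_ℝ - gε x - 2 * ε) ≤ 0 := by
  intro x hx p hp
  have hL0 : (0:ℝ) ≤ L := hL.le
  have hxe : ⟪x, eLast n⟫_ℝ = 0 := hx.2
  have hxball : x ∈ ball (0 : En (n + 1)) r := hx.1
  have hxK : x ∈ ball (0 : En (n + 1)) r ∩ {x : En (n + 1) | ⟪x, eLast n⟫_ℝ ≤ 0} :=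
    ⟨hx.1, le_of_eq hxe⟩
  have he : ‖eLast n‖ = 1 := by
    rw [eLast, EuclideanSpace.norm_single]; norm_num
  have hee : ⟪eLast n, eLast n⟫_ℝ = 1 := by
    rw [real_inner_self_eq_norm_sq, he]; norm_num
  by_cases hGp : G x p ≤ 0
  · exact min_le_of_left_le hGp
  push_neg at hGp
  have hγp : ⟪γ x, p⟫_ℝ - g x ≤ 0 := by
    rcases min_le_iff.1 (hsub₂ x hx p hp) with h | h
    · linarith
    · exact h
  apply min_le_of_right_le
  -- notation
  have hγn : 0 < ⟪γ x, eLast n⟫_ℝ := hγ x hx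
  have hγεn : 0 ≤ ⟪γε x, eLast n⟫_ℝ := hγε x hx
  have hγγ : ‖γε x - γ x‖ ≤ ε / L := hγγε x hx
  have hgg : |gε x - g x| ≤ ε := hggε x hx
  have hrx : 0 < r - ‖x‖ := by
    rw [mem_ball, dist_eq_norm, sub_zero] at hxball; linarith
  have heK : ∀ y ∈ ball (0 : En (n + 1)) r ∩ {y : En (n + 1) | ⟪y, eLast n⟫_ℝ ≤ 0},
      ⟪y - x, eLast n⟫_ℝ ≤ 0 := by
    intro y hy
    have : ⟪y, eLast n⟫_ℝ ≤ 0 := hy.2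
    rw [inner_sub_left, hxe]
    linarith
  -- tangential and normal components of p
  obtain ⟨a, ha⟩ : ∃ a : ℝ, a = ⟪p, eLast n⟫_ℝ := ⟨_, rfl⟩
  obtain ⟨P, hPdef⟩ : ∃ P, P = p - a • eLast n := ⟨_, rfl⟩
  have hPe : ⟪P, eLast n⟫_ℝ = 0 := by
    rw [hPdef, inner_sub_left, real_inner_smul_left, hee, ha]; ring
  have hEP : ⟪eLast n, P⟫_ℝ = 0 := by rw [real_inner_comm]; exact hPe
  have hpPe : p = P + a • eLast n := by rw [hPdef]; abel
  have hpP : ⟪p, P⟫_ℝ = ‖P‖ ^ 2 := by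
    rw [hpPe, inner_add_left, real_inner_smul_left, hEP, real_inner_self_eq_norm_sq]
    ring
  have hppsq : ‖p‖ ^ 2 = ‖P‖ ^ 2 + a ^ 2 := by
    rw [hpPe, norm_add_sq_real, real_inner_smul_right, hPe, norm_smul,
      Real.norm_eq_abs, he, mul_one, sq_abs]
    ring
  -- Claim A : the tangential part is bounded by L
  have hPnorm : ‖P‖ ≤ L := by
    have hmem : ∀ t : ℝ, 0 < t → t < (r - ‖x‖) / (‖P‖ + 1) →
        x + t • (-P) ∈ ball (0 : En (n + 1)) r ∩ {y : En (n + 1) | ⟪y, eLast n⟫_ℝ ≤ 0} := by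
      intro t ht htl
      constructor
      · rw [mem_ball, dist_eq_norm, sub_zero]
        have h1 : ‖x + t • (-P)‖ ≤ ‖x‖ + t * ‖P‖ := by
          have := norm_add_le x (t • (-P))
          rw [norm_smul, Real.norm_eq_abs, abs_of_pos ht, norm_neg] at this
          exact this
        have h2 : t * (‖P‖ + 1) < r - ‖x‖ := by
          have := mul_lt_mul_of_pos_left htl (by positivity : (0:ℝ) < ‖P‖ + 1)
          rw [mul_div_cancel₀] at this
          · linarith [this]
          · positivity
        nlinarith
      · show ⟪x + t • (-P), eLast n⟫_ℝ ≤ 0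
        rw [inner_add_left, real_inner_smul_left, inner_neg_left, hxe, hPe]
        ring_nf
        exact le_refl 0
    have hge := supDiff_inner_ge hu hxK hp (-P) (by positivity) hmem
    rw [inner_neg_right, hpP, norm_neg] at hge
    nlinarith [norm_nonneg P]
  -- the key quantitative estimate
  have key : ∀ δ : ℝ, 0 < δ → ⟪γε x, p⟫_ℝ - gε x - 2 * ε ≤ δ := by
    intro δ hδ
    obtain ⟨L', hL'def⟩ : ∃ L' : ℝ, L' = (L : ℝ) + (L : ℝ) * δ / (2 * ε) := ⟨_, rfl⟩
    have hL' : (L : ℝ) < L' := by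
      have h1 : 0 < (L : ℝ) * δ / (2 * ε) := by positivity
      rw [hL'def]; linarith
    have hL'pos : 0 < L' := lt_of_le_of_lt hL0 hL'
    -- find a good vector q
    obtain ⟨q, hqn, hqγ, hqγε⟩ : ∃ q : En (n + 1), ‖q‖ ≤ L' ∧
        ⟪γ x, q⟫_ℝ ≤ g x + δ / 2 ∧ ⟪γε x, p⟫_ℝ ≤ ⟪γε x, q⟫_ℝ := by
      by_cases hpL : ‖p‖ ≤ L'
      · exact ⟨p, hpL, by linarith, le_refl _⟩
      push_neg at hpL
      -- the normal component is negative
      have haneg : a < 0 := by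
        by_contra hanonneg
        push_neg at hanonneg
        have hmem : ∀ t : ℝ, 0 < t → t < (r - ‖x‖) / (‖p‖ + 1) →
            x + t • (-p) ∈ ball (0 : En (n + 1)) r ∩
              {y : En (n + 1) | ⟪y, eLast n⟫_ℝ ≤ 0} := by
          intro t ht htl
          constructor
          · rw [mem_ball, dist_eq_norm, sub_zero]
            have h1 : ‖x + t • (-p)‖ ≤ ‖x‖ + t * ‖p‖ := by
              have := norm_add_le x (t • (-p))
              rw [norm_smul, Real.norm_eq_abs, abs_of_pos ht, norm_neg] at this
              exact this
            have h2 : t * (‖p‖ + 1) < r - ‖x‖ := by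
              have := mul_lt_mul_of_pos_left htl (by positivity : (0:ℝ) < ‖p‖ + 1)
              rw [mul_div_cancel₀] at this
              · linarith [this]
              · positivity
            nlinarith
          · show ⟪x + t • (-p), eLast n⟫_ℝ ≤ 0
            rw [inner_add_left, real_inner_smul_left, inner_neg_left, hxe, ← ha]
            nlinarith
        have hge := supDiff_inner_ge hu hxK hp (-p) (by positivity) hmem
        rw [inner_neg_right, real_inner_self_eq_norm_sq, norm_neg] at hge
        nlinarith [norm_nonneg p]
      -- the renormalized vector Q = P - c • e is in the superdifferential
      obtain ⟨c, hcdef⟩ : ∃ c : ℝ, c = Real.sqrt (L' ^ 2 - ‖P‖ ^ 2) := ⟨_, rfl⟩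
      have hsq : (0:ℝ) < L' ^ 2 - ‖P‖ ^ 2 := by nlinarith [norm_nonneg P]
      have hc : 0 < c := hcdef ▸ Real.sqrt_pos.2 hsq
      have hc2 : c ^ 2 = L' ^ 2 - ‖P‖ ^ 2 := hcdef ▸ Real.sq_sqrt hsq.le
      have hQsup : P - c • eLast n ∈
          supDiff (ball 0 r ∩ {y : En (n + 1) | ⟪y, eLast n⟫_ℝ ≤ 0}) u x := by
        have := claimB rfl he hL' hxball hxe hu hp (by rw [← ha, ← hPdef]; exact hPnorm)
        rw [← ha, ← hPdef, ← hcdef] at this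
        exact this
      have hQnorm : ‖P - c • eLast n‖ = L' := by
        have h1 : ‖P - c • eLast n‖ ^ 2 = L' ^ 2 := by
          rw [sub_eq_add_neg, norm_add_sq_real, inner_neg_right, real_inner_smul_right,
            hPe, norm_neg, norm_smul, Real.norm_eq_abs, he, mul_one, sq_abs]
          rw [hc2]; ring
        calc ‖P - c • eLast n‖ = Real.sqrt (‖P - c • eLast n‖ ^ 2) :=
              (Real.sqrt_sq (norm_nonneg _)).symm
        _ = Real.sqrt (L' ^ 2) := by rw [h1]
        _ = L' := Real.sqrt_sq hL'pos.le
      have hac : a < -c := by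
        nlinarith [hppsq, hc2, hpL, norm_nonneg p, hc]
      have hγPa : ⟪γ x, p⟫_ℝ = ⟪γ x, P⟫_ℝ + a * ⟪γ x, eLast n⟫_ℝ := by
        rw [hpPe, inner_add_right, real_inner_smul_right]
      by_cases hγq : ⟪γ x, P - c • eLast n⟫_ℝ ≤ g x
      · refine ⟨P - c • eLast n, le_of_eq hQnorm, by linarith, ?_⟩
        have hpq : p = (P - c • eLast n) + (a + c) • eLast n := by
          rw [hpPe, add_smul]; abel
        rw [hpq, inner_add_right, real_inner_smul_right]
        have h2 : (a + c) * ⟪γε x, eLast n⟫_ℝ ≤ 0 :=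
          mul_nonpos_of_nonpos_of_nonneg (by linarith) hγεn
        linarith
      · push_neg at hγq
        have hγQ : ⟪γ x, P - c • eLast n⟫_ℝ =
            ⟪γ x, P⟫_ℝ - c * ⟪γ x, eLast n⟫_ℝ := by
          rw [inner_sub_right, real_inner_smul_right]
        obtain ⟨s₀, hs₀def⟩ : ∃ s₀ : ℝ, s₀ = (g x - ⟪γ x, P⟫_ℝ) / ⟪γ x, eLast n⟫_ℝ :=
          ⟨_, rfl⟩
        have hs₀γ : s₀ * ⟪γ x, eLast n⟫_ℝ = g x - ⟪γ x, P⟫_ℝ := by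
          rw [hs₀def, div_mul_cancel₀ _ hγn.ne']
        have hs₀c : s₀ < -c := by
          have h3 : ⟪γ x, P⟫_ℝ - c * ⟪γ x, eLast n⟫_ℝ > g x := by
            rw [← hγQ]; exact hγq
          nlinarith [hs₀γ, hγn]
        have has₀ : a ≤ s₀ := by
          have h4 : ⟪γ x, P⟫_ℝ + a * ⟪γ x, eLast n⟫_ℝ ≤ g x := by
            rw [← hγPa]; linarith
          nlinarith [hs₀γ, hγn]
        obtain ⟨η, hηdef⟩ : ∃ η : ℝ, η = min (δ / (2 * ⟪γ x, eLast n⟫_ℝ)) (-c - s₀) :=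
          ⟨_, rfl⟩
        have hη : 0 < η := by
          rw [hηdef]
          apply lt_min (by positivity) (by linarith)
        have hηγ : η * ⟪γ x, eLast n⟫_ℝ ≤ δ / 2 := by
          have h5 : η ≤ δ / (2 * ⟪γ x, eLast n⟫_ℝ) := hηdef ▸ min_le_left _ _
          have h6 : η * ⟪γ x, eLast n⟫_ℝ ≤ δ / (2 * ⟪γ x, eLast n⟫_ℝ) *
              ⟪γ x, eLast n⟫_ℝ := mul_le_mul_of_nonneg_right h5 hγn.le
          have h7 : δ / (2 * ⟪γ x, eLast n⟫_ℝ) * ⟪γ x, eLast n⟫_ℝ = δ / 2 := by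
            have gen : ∀ A B : ℝ, B ≠ 0 → A / (2 * B) * B = A / 2 := by
              intro A B hB; field_simp
            exact gen δ _ hγn.ne'
          linarith
        have hsc : s₀ + η ≤ -c := by
          have := hηdef ▸ min_le_right (δ / (2 * ⟪γ x, eLast n⟫_ℝ)) (-c - s₀)
          linarith
        have hqeq : P + (s₀ + η) • eLast n =
            (P - c • eLast n) - (-c - (s₀ + η)) • eLast n := by
          have h9 : (-c - (s₀ + η)) • eLast n = -(c • eLast n) - (s₀ + η) • eLast n := by
            rw [sub_smul, neg_smul]
          rw [h9]; abel
        have hqsup : P + (s₀ + η) • eLast n ∈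
            supDiff (ball 0 r ∩ {y : En (n + 1) | ⟪y, eLast n⟫_ℝ ≤ 0}) u x := by
          rw [hqeq]
          exact supDiff_mem_sub heK (by linarith) hQsup
        have hγqs : ⟪γ x, P + (s₀ + η) • eLast n⟫_ℝ = g x + η * ⟪γ x, eLast n⟫_ℝ := by
          rw [inner_add_right, real_inner_smul_right, add_mul, hs₀γ]
          ring
        have hGq : G x (P + (s₀ + η) • eLast n) ≤ 0 := by
          rcases min_le_iff.1 (hsub₂ x hx (P + (s₀ + η) • eLast n) hqsup) with h | h
          · exact h
          · rw [hγqs, add_sub_cancel_left] at h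
            exact absurd h (not_le.2 (mul_pos hη hγn))
        have hqL : ‖P + (s₀ + η) • eLast n‖ ≤ (L : ℝ) := by
          have := hGlev x hxK hGq
          rwa [mem_closedBall, dist_eq_norm, sub_zero] at this
        refine ⟨P + (s₀ + η) • eLast n, le_trans hqL hL'.le, by linarith [hγqs, hηγ], ?_⟩
        have hpq : p = (P + (s₀ + η) • eLast n) + (a - (s₀ + η)) • eLast n := by
          rw [hpPe, sub_smul]; abel
        rw [hpq, inner_add_right, real_inner_smul_right]
        have h8 : (a - (s₀ + η)) * ⟪γε x, eLast n⟫_ℝ ≤ 0 :=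
          mul_nonpos_of_nonpos_of_nonneg (by linarith) hγεn
        linarith
    -- conclude the estimate
    have hsplit : ⟪γε x, q⟫_ℝ = ⟪γ x, q⟫_ℝ + ⟪γε x - γ x, q⟫_ℝ := by
      rw [inner_sub_left]; ring
    have hbound : ⟪γε x - γ x, q⟫_ℝ ≤ (ε / L) * L' :=
      le_trans (real_inner_le_norm _ _)
        (mul_le_mul hγγ hqn (norm_nonneg q) (by positivity))
    have hLL' : (ε / (L : ℝ)) * L' = ε + δ / 2 := by
      rw [hL'def]
      field_simp
    have hgl : g x - ε ≤ gε x := by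
      have := (abs_le.1 hgg).1
      linarith
    linarith
  have h0 : ⟪γε x, p⟫_ℝ - gε x - 2 * ε ≤ 0 := by
    by_contra hcon
    push_neg at hcon
    have := key ((⟪γε x, p⟫_ℝ - gε x - 2 * ε) / 2) (by linarith)
    linarith
  exact h0
end
end
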